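/- For all a ≤ b in Fin n with a ≥ 2, the determinant of I − D_{a−1}·M_q(t_{b,a}) factors as det(I − D_{a−1}·M_q(t_{b,a})) = ∏_{T} (1 − σ_T)^{(b−a)!·(b−a+2)·(n−b+a−2)!}, where the product runs over all subsets T ⊆ Fin n of cardinality b−a+2. -/

import Mathlib

/-- The square complex matrices indexed by the symmetric group `Equiv.Perm (Fin n)`. -/
abbrev PermMatrix (n : ℕ) := Matrix (Equiv.Perm (Fin n)) (Equiv.Perm (Fin n)) ℂ

/-- The set of inversions `I(g) = {(a,b) : a < b and g(a) > g(b)}` of a permutation. -/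
def invSet {n : ℕ} (g : Equiv.Perm (Fin n)) : Finset (Fin n × Fin n) :=
  Finset.univ.filter fun p => p.1 < p.2 ∧ g p.2 < g p.1

/-- The matrix `M_q(g)`, with `(σ,τ)`-entry `∏_{(a,b) ∈ I(g)} q (τ b) (τ a)`
if `σ = τ ∘ g⁻¹` and `0` otherwise. -/
def twistMat (n : ℕ) (q : Fin n → Fin n → ℂ) (g : Equiv.Perm (Fin n)) : PermMatrix n :=
  fun σ τ => if σ = τ * g⁻¹ then ∏ p ∈ invSet g, q (τ p.2) (τ p.1) else 0

/-- `IsTCycle a b s` says that `s` is the cycle `t_{b,a}` (for `a ≤ b`):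
`s i = i + 1` for `a ≤ i ≤ b - 1`, `s b = a`, and `s i = i` otherwise
(in particular `t_{b,b} = id`). -/
def IsTCycle {n : ℕ} (a b : Fin n) (s : Equiv.Perm (Fin n)) : Prop :=
  (∀ i : Fin n, a ≤ i → i < b → (s i : ℕ) = (i : ℕ) + 1) ∧ s b = a ∧
    ∀ i : Fin n, ¬(a ≤ i ∧ i ≤ b) → s i = i

/-- The successor `a + 1` in `Fin n` (computed mod `n`; in all uses below one has
`a + 1 < n`, so no wraparound occurs). -/
def finSucc {n : ℕ} (a : Fin n) : Fin n :=
  ⟨((a : ℕ) + 1) % n, Nat.mod_lt _ a.pos⟩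

/-- The predecessor `a - 1` in `Fin n` (truncated at `0`; in all uses below one has
`1 ≤ a`, so it is the genuine predecessor). -/
def finPred {n : ℕ} (a : Fin n) : Fin n :=
  ⟨(a : ℕ) - 1, lt_of_le_of_lt (Nat.sub_le _ _) a.isLt⟩

/-- The diagonal matrix `D_a = M_q(t_{a+1,a})²` whose diagonal entry at `τ` is
`q (τ a) (τ (a+1)) · q (τ (a+1)) (τ a)`. -/
def Dmat (n : ℕ) (q : Fin n → Fin n → ℂ) (a : Fin n) : PermMatrix n :=
  Matrix.diagonal fun τ => q (τ a) (τ (finSucc a)) * q (τ (finSucc a)) (τ a)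

/-- `σ_T = ∏_{i,j ∈ T, i ≠ j} q i j`, the product over all ordered pairs of distinct
elements of `T`. -/
def sigmaT {n : ℕ} (q : Fin n → Fin n → ℂ) (T : Finset (Fin n)) : ℂ :=
  ∏ p ∈ (T ×ˢ T).filter fun p => p.1 ≠ p.2, q p.1 p.2

/-!
`D_{a-1} M_q(t_{b,a})` has exactly one nonzero entry in each column `τ`, in row `τ t⁻¹`
(`t = t_{b,a}`), so it is a weighted permutation matrix of right multiplication by `t⁻¹`. The
cycles of this permutation are the left cosets `τ⟨t⟩`, all of length `orderOf t = b - a + 1`,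
hence `det (1 - D M)` is the product over the cosets of `1 - (product of the weights along the
coset)`. Along the coset of `τ` the weights multiply to `σ_T` with `T = τ {a-1, …, b}`; grouping
the cosets by `T`, every `(b-a+2)`-subset occurs for `(b-a+2)! (n-b+a-2)! / (b-a+1)` cosets.
-/

open Matrix Finset Equiv

lemma one_sub_weighted_finRotate_apply {R : Type*} [CommRing R] {m : ℕ} (w : Fin (m + 2) → R)
    (i j : Fin (m + 2)) :
    (1 - of fun i j : Fin (m + 2) => if j = finRotate (m + 2) i then w j else 0) i j =
      (if (i : ℕ) = j then 1 else 0) -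
        if (j : ℕ) = (if (i : ℕ) = m + 1 then 0 else (i : ℕ) + 1) then w j else 0 := by
  have hrot : (finRotate (m + 2) i : ℕ) = if (i : ℕ) = m + 1 then 0 else (i : ℕ) + 1 := by
    split_ifs with h
    · rw [show i = Fin.last _ from Fin.ext h, finRotate_last, Fin.val_zero]
    · exact coe_finRotate_of_ne_last fun h' => h (by simp [h'])
  simp only [Matrix.sub_apply, one_apply, of_apply, Fin.ext_iff, hrot]

theorem det_one_sub_weighted_finRotate {R : Type*} [CommRing R] {k : ℕ} (hk : 0 < k)
    (w : Fin k → R) :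
    det (1 - of fun i j : Fin k => if j = finRotate k i then w j else 0) = 1 - ∏ j, w j := by
  obtain ⟨m, rfl⟩ := Nat.exists_eq_add_one_of_ne_zero hk.ne'
  rcases m with _ | m
  · simp [Matrix.det_unique, finRotate_one]
  have hN := one_sub_weighted_finRotate_apply w
  set N : Matrix (Fin (m + 2)) (Fin (m + 2)) R :=
    1 - of fun i j => if j = finRotate (m + 2) i then w j else 0
  -- Expand along column `0`: only rows `0` and `last` contribute, and their minors are
  -- upper unitriangular, resp. lower triangular with diagonal `-w 1, …, -w (m + 1)`.
  have hupper : (N.submatrix Fin.succ Fin.succ).IsUpperTriangular := by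
    intro i j hji
    rw [submatrix_apply, hN]
    simp only [id, Fin.val_succ, Fin.lt_def] at hji ⊢
    split_ifs <;> first | omega | simp_all
  have hlower : (N.submatrix Fin.castSucc Fin.succ).IsLowerTriangular := by
    intro i j hij
    rw [submatrix_apply, hN]
    simp only [OrderDual.toDual_lt_toDual, Fin.val_succ, Fin.val_castSucc, Fin.lt_def]
      at hij ⊢
    split_ifs <;> first | omega | simp_all
  have hdiag_lower : ∀ i : Fin (m + 1), N i.castSucc i.succ = -w i.succ := by
    intro i
    rw [hN]
    simp only [Fin.val_succ, Fin.val_castSucc]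
    split_ifs <;> first | omega | simp_all
  have hdiag_upper : ∀ i : Fin (m + 1), N i.succ i.succ = 1 := by
    intro i
    rw [hN]
    split_ifs <;> first | omega | simp_all
  have h00 : N 0 0 = 1 := by rw [hN]; simp
  have hlast0 : N (Fin.last _) 0 = -w 0 := by rw [hN]; simp
  rw [det_succ_column_zero, Fintype.sum_eq_add 0 (Fin.last _) (Fin.last_pos).ne]
  · rw [Fin.succAbove_zero, Fin.succAbove_last, det_of_isUpperTriangular hupper,
      det_of_isLowerTriangular _ hlower]
    simp only [submatrix_apply, hdiag_lower, hdiag_upper, h00, hlast0, Finset.prod_const_one,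
      Finset.prod_neg, Finset.card_univ, Fintype.card_fin, Fin.val_last, Fin.val_zero,
      Fin.prod_univ_succ w]
    have hsign : ((-1 : R) ^ (m + 1)) * (-1) ^ (m + 1) = 1 := by rw [← mul_pow]; simp
    linear_combination (-(w 0 * ∏ i : Fin (m + 1), w i.succ)) * hsign
  · rintro i ⟨hi0, hilast⟩
    have h0 : (i : ℕ) ≠ 0 := fun h => hi0 (Fin.ext h)
    have hl : (i : ℕ) ≠ m + 1 := fun h => hilast (Fin.ext h)
    rw [hN]
    simp [h0, hl]

section CosetBlocks

variable {G : Type*} [Group G] (s : G)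

lemma bijective_coset_out_mul_pow [Finite G] :
    Function.Bijective fun p : Fin (orderOf s) × (G ⧸ Subgroup.zpowers s) =>
      p.2.out * s ^ (p.1 : ℕ) := by
  classical
  have hmk : ∀ (C : G ⧸ Subgroup.zpowers s) (j : ℕ), ((C.out * s ^ j : G) : G ⧸ _) = C :=
    fun C j => by
      rw [QuotientGroup.mk_mul_of_mem _ (Subgroup.npow_mem_zpowers s j), QuotientGroup.out_eq']
  refine ⟨fun ⟨i, C⟩ ⟨j, C'⟩ h => ?_, fun τ => ?_⟩
  · have hC : C = C' := by
      simpa only [hmk] using congrArg (QuotientGroup.mk (s := Subgroup.zpowers s)) h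
    subst hC
    exact Prod.ext (Fin.ext (pow_injOn_Iio_orderOf i.isLt j.isLt (mul_left_cancel h))) rfl
  · have hmem : (τ : G ⧸ Subgroup.zpowers s).out⁻¹ * τ ∈ Subgroup.zpowers s := by
      rw [← QuotientGroup.eq, QuotientGroup.out_eq']
    obtain ⟨j, hj, hpow⟩ := mem_image.mp (mem_zpowers_iff_mem_range_orderOf.mp hmem)
    exact ⟨(⟨j, mem_range.mp hj⟩, τ), by simp [hpow]⟩

noncomputable def cosetPowEquiv [Finite G] : Fin (orderOf s) × (G ⧸ Subgroup.zpowers s) ≃ G :=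
  Equiv.ofBijective _ (bijective_coset_out_mul_pow s)

lemma cosetPowEquiv_apply [Finite G] (j : Fin (orderOf s)) (C : G ⧸ Subgroup.zpowers s) :
    cosetPowEquiv s (j, C) = C.out * s ^ (j : ℕ) := rfl

lemma cosetPowEquiv_mul_self [Finite G] (j : Fin (orderOf s)) (C : G ⧸ Subgroup.zpowers s) :
    cosetPowEquiv s (j, C) * s = cosetPowEquiv s (finRotate _ j, C) := by
  have : NeZero (orderOf s) := ⟨(orderOf_pos s).ne'⟩
  rw [cosetPowEquiv_apply, cosetPowEquiv_apply, mul_assoc, ← pow_succ, finRotate_apply,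
    Fin.val_add, Fin.val_one', Nat.add_mod_mod, pow_mod_orderOf]

theorem det_one_sub_weighted_mul_inv [Fintype G] [DecidableEq G]
    [Fintype (G ⧸ Subgroup.zpowers s)] {R : Type*} [CommRing R] (w : G → R) :
    det (1 - of fun σ τ : G => if σ = τ * s⁻¹ then w τ else 0) =
      ∏ C : G ⧸ Subgroup.zpowers s, (1 - ∏ j ∈ range (orderOf s), w (C.out * s ^ j)) := by
  set e := cosetPowEquiv s
  have hshift : ∀ p q, e p = e q * s⁻¹ ↔ q = (finRotate _ p.1, p.2) := fun p q => by
    rw [eq_mul_inv_iff_mul_eq, cosetPowEquiv_mul_self, e.apply_eq_iff_eq, eq_comm]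
  have hblocks : (1 - of fun σ τ : G => if σ = τ * s⁻¹ then w τ else 0).submatrix e e =
      blockDiagonal fun C => 1 - of fun i j => if j = finRotate _ i then w (e (j, C)) else 0 := by
    ext ⟨i, C⟩ ⟨j, C'⟩
    simp only [submatrix_apply, Matrix.sub_apply, one_apply, of_apply, blockDiagonal_apply,
      e.apply_eq_iff_eq, hshift, Prod.ext_iff]
    rcases eq_or_ne C C' with rfl | hC
    · simp
    · simp [hC, hC.symm]
  rw [← det_submatrix_equiv_self e, hblocks, det_blockDiagonal]
  refine Finset.prod_congr rfl fun C _ => ?_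
  rw [det_one_sub_weighted_finRotate (orderOf_pos s)]
  exact congrArg _ (Fin.prod_univ_eq_prod_range (fun j => w (C.out * s ^ j)) _)

lemma card_filter_eq_orderOf_mul_card [Fintype G] [Fintype (G ⧸ Subgroup.zpowers s)]
    {β : Type*} [DecidableEq β] (f : G → β) (hf : ∀ g, f (g * s) = f g) (t : β) :
    #{g | f g = t} = orderOf s * #{C : G ⧸ Subgroup.zpowers s | f C.out = t} := by
  have hpow : ∀ g (j : ℕ), f (g * s ^ j) = f g := by
    intro g j
    induction j with
    | zero => simp
    | succ j ih => rw [pow_succ, ← mul_assoc, hf, ih]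
  have hcard : #(univ ×ˢ ({C : G ⧸ Subgroup.zpowers s | f C.out = t} : Finset _)) =
      #{g | f g = t} :=
    card_equiv (cosetPowEquiv s) fun ⟨j, C⟩ => by simp [cosetPowEquiv_apply, hpow]
  rw [← hcard, card_product, card_univ, Fintype.card_fin]

end CosetBlocks

lemma card_filter_image_perm_eq_self {α : Type*} [Fintype α] [DecidableEq α] (J : Finset α) :
    #{π : Perm α | J.image π = J} = (#J).factorial * (Fintype.card α - #J).factorial := by
  set f : α → Bool := fun x => decide (x ∈ J)
  have hstab : ∀ π : Perm α, J.image π = J ↔ f ∘ π = f := by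
    intro π
    simp only [f, funext_iff, Function.comp_apply, decide_eq_decide]
    refine ⟨fun h x => ?_, fun h => ?_⟩
    · simpa [h] using π.injective.mem_finset_image (s := J) (a := x)
    · ext y
      simp only [mem_image]
      exact ⟨fun ⟨x, hx, hxy⟩ => hxy ▸ (h x).2 hx,
        fun hy => ⟨π.symm y, (h _).1 (by simpa using hy), π.apply_symm_apply y⟩⟩
  rw [← Fintype.card_subtype, Fintype.card_congr (Equiv.subtypeEquivRight hstab),
    DomMulAct.stabilizer_card f, Fintype.prod_bool]
  simp [f, Fintype.card_subtype, Finset.filter_not, Finset.card_sdiff]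

lemma card_filter_image_perm_eq {α : Type*} [Fintype α] [DecidableEq α] {J T : Finset α}
    (h : #J = #T) :
    #{π : Perm α | J.image π = T} = (#J).factorial * (Fintype.card α - #J).factorial := by
  obtain ⟨π₀, hπ₀⟩ : ∃ π₀ : Perm α, J.image π₀ = T := by
    let e : J ≃ T := Fintype.equivOfCardEq (by simpa using h)
    refine ⟨e.extendSubtype, eq_of_subset_of_card_le ?_ ?_⟩
    · rintro _ hy
      obtain ⟨x, hx, rfl⟩ := mem_image.mp hy
      exact e.extendSubtype_mem x hx
    · rw [card_image_of_injective _ (Equiv.injective _), h]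
  rw [← card_filter_image_perm_eq_self J]
  refine card_equiv (Equiv.mulLeft π₀⁻¹) fun π => ?_
  simp only [mem_filter, mem_univ, true_and, ← hπ₀, Equiv.coe_mulLeft]
  rw [Perm.coe_mul, ← image_image, ← (image_injective (π₀⁻¹).injective).eq_iff, image_image,
    image_image, Perm.inv_def, Equiv.symm_comp_self, image_id]

lemma Finset.image_perm_pow_eq_self_of_mapsTo {α : Type*} [DecidableEq α] {U : Finset α}
    {s : Perm α} (h : ∀ x ∈ U, s x ∈ U) (j : ℕ) : U.image ⇑(s ^ j) = U := by
  have hpow : ∀ x ∈ U, (s ^ j) x ∈ U := by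
    induction j with
    | zero => simp
    | succ j ih => intro x hx; rw [pow_succ', Perm.mul_apply]; exact h _ (ih x hx)
  exact eq_of_subset_of_card_le (image_subset_iff.2 hpow)
    (card_image_of_injective _ (s ^ j).injective).ge

lemma sigmaT_eq_prod_erase {n : ℕ} (q : Fin n → Fin n → ℂ) (T : Finset (Fin n)) :
    sigmaT q T = ∏ u ∈ T, ∏ v ∈ T.erase u, q u v := by
  rw [sigmaT, prod_filter, prod_product]
  refine prod_congr rfl fun u _ => ?_
  rw [← prod_filter]
  congr 1
  ext v
  simp only [mem_filter, mem_erase, ne_comm, and_comm]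

lemma sigmaT_image {n : ℕ} (q : Fin n → Fin n → ℂ) (τ : Perm (Fin n)) (T : Finset (Fin n)) :
    sigmaT q (T.image τ) = sigmaT (fun i j => q (τ i) (τ j)) T := by
  simp only [sigmaT_eq_prod_erase, ← image_erase τ.injective,
    prod_image fun _ _ _ _ h => τ.injective h]

lemma sigmaT_insert {n : ℕ} (q : Fin n → Fin n → ℂ) {x : Fin n} {U : Finset (Fin n)}
    (hx : x ∉ U) :
    sigmaT q (insert x U) = ∏ u ∈ U, q x u * q u x * ∏ v ∈ U.erase u, q u v := by
  have hrow : ∀ u ∈ U, ∏ v ∈ (insert x U).erase u, q u v = q u x * ∏ v ∈ U.erase u, q u v :=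
    fun u hu => by
      rw [erase_insert_of_ne (ne_of_mem_of_not_mem hu hx).symm,
        prod_insert fun h => hx (mem_of_mem_erase h)]
  rw [sigmaT_eq_prod_erase, prod_insert hx, erase_insert hx, prod_congr rfl hrow,
    ← prod_mul_distrib]
  simp only [mul_assoc]

lemma finSucc_finPred {n : ℕ} {a : Fin n} (ha : 1 ≤ (a : ℕ)) : finSucc (finPred a) = a := by
  ext
  simp only [finSucc, finPred]
  rw [Nat.sub_add_cancel ha, Nat.mod_eq_of_lt a.isLt]

def twistWeight {n : ℕ} (q : Fin n → Fin n → ℂ) (a b : Fin n) (τ : Perm (Fin n)) : ℂ :=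
  q (τ (finPred a)) (τ b) * q (τ b) (τ (finPred a)) * ∏ i ∈ Ico a b, q (τ b) (τ i)

namespace IsTCycle

variable {n : ℕ} {a b : Fin n} {s : Perm (Fin n)} (hs : IsTCycle a b s)
include hs

lemma le : a ≤ b := by
  by_contra h
  have hb : s b = b := hs.2.2 b fun h' => h h'.1
  exact h (hb ▸ hs.2.1 ▸ le_rfl)

lemma val_apply (i : Fin n) :
    (s i : ℕ) =
      if (a : ℕ) ≤ i ∧ (i : ℕ) < b then (i : ℕ) + 1 else if i = b then (a : ℕ) else i := by
  split_ifs with h₁ h₂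
  · exact hs.1 i h₁.1 h₁.2
  · rw [h₂, hs.2.1]
  · rw [hs.2.2 i fun h => ?_]
    rcases h.2.lt_or_eq with h' | h'
    exacts [h₁ ⟨h.1, h'⟩, h₂ h']

lemma apply_mem_Icc {i : Fin n} (hi : i ∈ Icc a b) : s i ∈ Icc a b := by
  have := hs.le
  simp only [mem_Icc, Fin.le_def, Fin.ext_iff, hs.val_apply] at hi this ⊢
  split_ifs <;> omega

lemma apply_mem_Icc_finPred {i : Fin n} (hi : i ∈ Icc (finPred a) b) :
    s i ∈ Icc (finPred a) b := by
  have := hs.le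
  simp only [mem_Icc, Fin.le_def, Fin.ext_iff, finPred, hs.val_apply] at hi this ⊢
  split_ifs <;> omega

lemma apply_finPred (ha : 1 ≤ (a : ℕ)) : s (finPred a) = finPred a := by
  have := Fin.le_def.1 hs.le
  ext
  rw [hs.val_apply]
  simp only [finPred, Fin.ext_iff]
  split_ifs <;> omega

lemma pow_apply_finPred (ha : 1 ≤ (a : ℕ)) (j : ℕ) : (s ^ j) (finPred a) = finPred a :=
  Perm.pow_apply_eq_self_of_apply_eq_self (hs.apply_finPred ha) j

lemma val_pow_succ_apply_right {d : ℕ} (hd : d ≤ (b : ℕ) - a) :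
    ((s ^ (d + 1)) b : ℕ) = a + d := by
  induction d with
  | zero => simp [hs.2.1]
  | succ d ih =>
    rw [pow_succ', Perm.mul_apply, hs.val_apply, ih (by omega)]
    split_ifs <;> omega

lemma injOn_pow_apply_right : Set.InjOn (fun j => (s ^ j) b) (range ((b : ℕ) - a + 1)) := by
  have hval : ∀ j ∈ range ((b : ℕ) - a + 1),
      ((s ^ j) b : ℕ) = if j = 0 then (b : ℕ) else a + j - 1 := by
    intro j hj
    rcases j with _ | d
    · simp
    · rw [hs.val_pow_succ_apply_right (by simp at hj; omega)]
      simp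
  intro i hi j hj hij
  have := congrArg Fin.val hij
  simp only [hval i hi, hval j hj] at this
  have := hs.le
  simp only [coe_range, Set.mem_Iio, Fin.le_def] at hi hj this
  split_ifs at * <;> omega

lemma image_range_pow_apply_right :
    (range ((b : ℕ) - a + 1)).image (fun j => (s ^ j) b) = Icc a b := by
  refine eq_of_subset_of_card_le ?_ ?_
  · refine image_subset_iff.2 fun j _ => ?_
    rw [← image_perm_pow_eq_self_of_mapsTo (fun _ => hs.apply_mem_Icc) j]
    exact mem_image_of_mem _ (right_mem_Icc.2 hs.le)
  · rw [card_image_of_injOn hs.injOn_pow_apply_right, card_range, Fin.card_Icc]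
    omega

lemma orderOf_eq : orderOf s = (b : ℕ) - a + 1 := by
  have hab := Fin.le_def.1 hs.le
  rw [orderOf_eq_iff (Nat.succ_pos _)]
  refine ⟨?_, fun m hm hm0 hpow => ?_⟩
  · have hb : (s ^ ((b : ℕ) - a + 1)) b = b :=
      Fin.ext ((hs.val_pow_succ_apply_right le_rfl).trans (by omega))
    ext i
    by_cases hi : i ∈ Icc a b
    · rw [← hs.image_range_pow_apply_right] at hi
      obtain ⟨j, -, rfl⟩ := mem_image.1 hi
      rw [Perm.one_apply, ← Perm.mul_apply, ← pow_add, add_comm, pow_add, Perm.mul_apply, hb]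
    · rw [Perm.pow_apply_eq_self_of_apply_eq_self (hs.2.2 i (by simpa using hi)),
        Perm.one_apply]
  · obtain ⟨d, rfl⟩ := Nat.exists_eq_add_one_of_ne_zero hm0.ne'
    have := hs.val_pow_succ_apply_right (d := d) (by omega)
    rw [hpow, Perm.one_apply] at this
    omega

lemma invSet_eq : invSet s = (Ico a b).image fun i => (i, b) := by
  have hab := Fin.le_def.1 hs.le
  ext ⟨i, j⟩
  simp only [invSet, mem_filter, mem_univ, true_and, mem_image, mem_Ico, Prod.mk.injEq,
    Fin.lt_def, Fin.le_def, hs.val_apply, Fin.ext_iff]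
  constructor
  · intro h
    refine ⟨i, ?_, rfl, ?_⟩ <;> split_ifs at h <;> omega
  · rintro ⟨k, hk, hki, hbj⟩
    split_ifs <;> omega

lemma Dmat_mul_twistMat (ha : 1 ≤ (a : ℕ)) (q : Fin n → Fin n → ℂ) :
    Dmat n q (finPred a) * twistMat n q s =
      of fun σ τ => if σ = τ * s⁻¹ then twistWeight q a b τ else 0 := by
  ext σ τ
  simp only [Dmat, twistMat, diagonal_mul, of_apply]
  split_ifs with h
  · subst h
    have hx : s⁻¹ (finPred a) = finPred a := Perm.inv_eq_iff_eq.2 (hs.apply_finPred ha).symm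
    have ha' : s⁻¹ a = b := Perm.inv_eq_iff_eq.2 hs.2.1.symm
    rw [finSucc_finPred ha, Perm.mul_apply, Perm.mul_apply, hx, ha', twistWeight, hs.invSet_eq,
      prod_image fun _ _ _ _ h => congrArg Prod.fst h]
  · rw [mul_zero]

lemma Icc_finPred (ha : 1 ≤ (a : ℕ)) : Icc (finPred a) b = insert (finPred a) (Icc a b) := by
  have := Fin.le_def.1 hs.le
  ext i
  simp only [mem_Icc, mem_insert, Fin.le_def, Fin.ext_iff, finPred]
  omega

lemma card_Icc_finPred (ha : 1 ≤ (a : ℕ)) : #(Icc (finPred a) b) = (b : ℕ) - a + 2 := by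
  have := Fin.le_def.1 hs.le
  simp only [Fin.card_Icc, finPred]
  omega

lemma prod_range_twistWeight_mul_pow (ha : 1 ≤ (a : ℕ)) (q : Fin n → Fin n → ℂ)
    (τ : Perm (Fin n)) :
    ∏ j ∈ range ((b : ℕ) - a + 1), twistWeight q a b (τ * s ^ j) =
      sigmaT q ((Icc (finPred a) b).image τ) := by
  have hx : finPred a ∉ Icc a b := by simp only [mem_Icc, Fin.le_def, finPred]; omega
  let F : Fin n → ℂ := fun u => q (τ (finPred a)) (τ u) * q (τ u) (τ (finPred a)) *
    ∏ v ∈ (Icc a b).erase u, q (τ u) (τ v)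
  have hweight : ∀ j, twistWeight q a b (τ * s ^ j) = F ((s ^ j) b) := by
    intro j
    have hIco : (Ico a b).image ⇑(s ^ j) = (Icc a b).erase ((s ^ j) b) := by
      rw [← Icc_erase_right, image_erase (s ^ j).injective,
        image_perm_pow_eq_self_of_mapsTo (fun _ => hs.apply_mem_Icc)]
    simp only [twistWeight, F, Perm.mul_apply, hs.pow_apply_finPred ha, ← hIco,
      prod_image fun _ _ _ _ h => (s ^ j).injective h]
  calc ∏ j ∈ range ((b : ℕ) - a + 1), twistWeight q a b (τ * s ^ j)
      = ∏ j ∈ range ((b : ℕ) - a + 1), F ((s ^ j) b) := prod_congr rfl fun j _ => hweight j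
    _ = ∏ u ∈ Icc a b, F u := by
      rw [← hs.image_range_pow_apply_right, prod_image hs.injOn_pow_apply_right]
    _ = sigmaT q ((Icc (finPred a) b).image τ) := by
      rw [hs.Icc_finPred ha, sigmaT_image, sigmaT_insert _ hx]

lemma card_filter_image_out_eq (ha : 1 ≤ (a : ℕ)) [Fintype (Perm (Fin n) ⧸ Subgroup.zpowers s)]
    {T : Finset (Fin n)} (hT : #T = (b : ℕ) - a + 2) :
    #{C : Perm (Fin n) ⧸ Subgroup.zpowers s | (Icc (finPred a) b).image C.out = T} =
      ((b : ℕ) - a).factorial * ((b : ℕ) - a + 2) * (n - b + a - 2).factorial := by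
  have hab := Fin.le_def.1 hs.le
  have hJ := hs.card_Icc_finPred ha
  have hJs : ∀ τ : Perm (Fin n), (Icc (finPred a) b).image ⇑(τ * s) =
      (Icc (finPred a) b).image τ := fun τ => by
    rw [Perm.coe_mul, ← image_image]
    congr 1
    simpa using image_perm_pow_eq_self_of_mapsTo (fun _ => hs.apply_mem_Icc_finPred) 1
  have hcount :=
    card_filter_eq_orderOf_mul_card s (fun τ => (Icc (finPred a) b).image τ) hJs T
  rw [card_filter_image_perm_eq (hJ.trans hT.symm), hs.orderOf_eq, hJ, Fintype.card_fin] at hcount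
  apply Nat.eq_of_mul_eq_mul_left (Nat.succ_pos ((b : ℕ) - a))
  rw [← hcount, show n - ((b : ℕ) - a + 2) = n - b + a - 2 by omega, Nat.factorial_succ,
    Nat.factorial_succ, Nat.succ_eq_add_one]
  ring

end IsTCycle

theorem det_one_sub_Dmat_mul_twistMat_general (n : ℕ) (q : Fin n → Fin n → ℂ)
    (a b : Fin n) (ha : 1 ≤ (a : ℕ))
    (s : Equiv.Perm (Fin n)) (hs : IsTCycle a b s) :
    ((1 : PermMatrix n) - Dmat n q (finPred a) * twistMat n q s).det =
      ∏ T ∈ Finset.powersetCard ((b : ℕ) - (a : ℕ) + 2) (Finset.univ : Finset (Fin n)),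
        (1 - sigmaT q T) ^
          (Nat.factorial ((b : ℕ) - (a : ℕ)) * ((b : ℕ) - (a : ℕ) + 2) *
            Nat.factorial (n - (b : ℕ) + (a : ℕ) - 2)) := by
  classical
  rw [hs.Dmat_mul_twistMat ha, det_one_sub_weighted_mul_inv, hs.orderOf_eq]
  simp only [hs.prod_range_twistWeight_mul_pow ha]
  rw [← prod_fiberwise_of_maps_to (g := fun C => (Icc (finPred a) b).image C.out)
    (t := powersetCard ((b : ℕ) - a + 2) univ) fun C _ => mem_powersetCard_univ.2
      ((card_image_of_injective _ C.out.injective).trans (hs.card_Icc_finPred ha))]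
  refine prod_congr rfl fun T hT => ?_
  rw [prod_congr rfl fun C hC => by rw [(mem_filter.1 hC).2], prod_const,
    hs.card_filter_image_out_eq ha (mem_powersetCard_univ.1 hT)]

/-- For `a ≤ b` in `Fin n` with `a ≥ 2` (`a ≥ 1` in 0-indexed terms), the determinant of
`I − D_{a−1} · M_q(t_{b,a})` factors as `∏_T (1 − σ_T)^{(b−a)!·(b−a+2)·(n−b+a−2)!}`,
the product being over all subsets `T ⊆ Fin n` of cardinality `b − a + 2`. -/
theorem det_one_sub_Dmat_mul_twistMat (n : ℕ) (hn : 1 ≤ n) (q : Fin n → Fin n → ℂ)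
    (a b : Fin n) (hab : a ≤ b) (ha : 1 ≤ (a : ℕ))
    (s : Equiv.Perm (Fin n)) (hs : IsTCycle a b s) :
    ((1 : PermMatrix n) - Dmat n q (finPred a) * twistMat n q s).det =
      ∏ T ∈ Finset.powersetCard ((b : ℕ) - (a : ℕ) + 2) (Finset.univ : Finset (Fin n)),
        (1 - sigmaT q T) ^
          (Nat.factorial ((b : ℕ) - (a : ℕ)) * ((b : ℕ) - (a : ℕ) + 2) *
            Nat.factorial (n - (b : ℕ) + (a : ℕ) - 2)) :=
  det_one_sub_Dmat_mul_twistMat_general n q a b ha s hs
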